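/- For any τ-critical graph G with τ(G) = t, the number of vertices satisfies |V(G)| ≤ 2t. -/

import Mathlib

/-!
Hajnal's lemma: in a τ-critical graph every independent set `S` satisfies `|S| ≤ |N(S)|`.
Applied to the complement of a minimum transversal `T`, whose neighbourhood lies in `T`,
it gives `|V| - τ ≤ τ`.

For Hajnal's lemma take a counterexample `S` of least size, an edge `su` with `s ∈ S`, and a
transversal `T'` of `G - su` with `|T'| < τ(G)`. By minimality Hall's condition holds for
`S \ {s}`, which is therefore matched into `N(S)` by edges of `G - su`; `T'` meets each of these
`|S| - 1` disjoint edges. Replacing `T' ∩ (S ∪ N(S))` by `N(S)` yields a transversal of `G` of size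
at most `|T'| - (|S| - 1) + |N(S)| ≤ |T'| < τ(G)`, a contradiction.
-/

open SimpleGraph

variable {V : Type*}

/-- A transversal set (vertex cover): a set of vertices incident to all edges. -/
def IsTransversal (G : SimpleGraph V) (T : Finset V) : Prop :=
  ∀ ⦃u v : V⦄, G.Adj u v → u ∈ T ∨ v ∈ T

/-- The transversal number `τ(G)`: minimum cardinality of a transversal set. -/
noncomputable def tauNum (G : SimpleGraph V) [Fintype V] : ℕ :=
  sInf {k | ∃ T : Finset V, T.card = k ∧ IsTransversal G T}

/-- `G` is τ-critical: it has no isolated vertex and deleting any edge decreases `τ`. -/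
def IsTauCritical (G : SimpleGraph V) [Fintype V] : Prop :=
  (∀ v : V, ∃ u, G.Adj v u) ∧
    ∀ e ∈ G.edgeSet, tauNum (G.deleteEdges {e}) < tauNum G

/-- `mK2 m` is the disjoint union of `m` copies of `K₂`. -/
def mK2 (m : ℕ) : SimpleGraph (Fin m × Fin 2) where
  Adj x y := x.1 = y.1 ∧ x.2 ≠ y.2
  symm := ⟨fun _ _ ⟨h1, h2⟩ => ⟨h1.symm, h2.symm⟩⟩
  loopless := ⟨fun _ ⟨_, h⟩ => h rfl⟩

/-- The spectral radius `λ₁(G)`: the largest eigenvalue of the adjacency matrix of `G`. -/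
noncomputable def specRad (G : SimpleGraph V) [Fintype V] [DecidableEq V]
    [DecidableRel G.Adj] : ℝ :=
  sSup (spectrum ℝ (G.adjMatrix ℝ))

/-- The signless Laplacian spectral radius `q₁(G)`: the largest eigenvalue of
`Q(G) = D(G) + A(G)`. -/
noncomputable def signlessLapSpecRad (G : SimpleGraph V) [Fintype V] [DecidableEq V]
    [DecidableRel G.Adj] : ℝ :=
  sSup (spectrum ℝ (Matrix.diagonal (fun v => (G.degree v : ℝ)) + G.adjMatrix ℝ))

open Finset Function

def SimpleGraph.neighborhood (G : SimpleGraph V) [Fintype V] [DecidableEq V]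
    [DecidableRel G.Adj] (S : Finset V) : Finset V :=
  S.biUnion fun v => G.neighborFinset v

@[simp]
lemma SimpleGraph.mem_neighborhood {G : SimpleGraph V} [Fintype V] [DecidableEq V]
    [DecidableRel G.Adj] {S : Finset V} {y : V} : y ∈ G.neighborhood S ↔ ∃ x ∈ S, G.Adj x y := by
  simp [neighborhood]

lemma exists_isTransversal_card_eq_tauNum (G : SimpleGraph V) [Fintype V] :
    ∃ T : Finset V, IsTransversal G T ∧ #T = tauNum G := by
  obtain ⟨T, hT, hTτ⟩ := Nat.sInf_mem (s := {k | ∃ T : Finset V, #T = k ∧ IsTransversal G T})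
    ⟨_, univ, rfl, fun u _ _ => .inl (mem_univ u)⟩
  exact ⟨T, hTτ, hT⟩

lemma tauNum_le_card {G : SimpleGraph V} [Fintype V] {T : Finset V} (hT : IsTransversal G T) :
    tauNum G ≤ #T :=
  Nat.sInf_le ⟨T, rfl, hT⟩

lemma IsTransversal.isIndepSet_compl {G : SimpleGraph V} [Fintype V] [DecidableEq V]
    {T : Finset V} (hT : IsTransversal G T) : G.IsIndepSet (↑Tᶜ : Set V) := by
  intro x hx y hy _ hxy
  simp only [coe_compl, Set.mem_compl_iff, mem_coe] at hx hy
  exact (hT hxy).elim hx hy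

lemma IsTransversal.neighborhood_compl_subset {G : SimpleGraph V} [Fintype V]
    [DecidableEq V] [DecidableRel G.Adj] {T : Finset V} (hT : IsTransversal G T) :
    G.neighborhood Tᶜ ⊆ T := by
  intro y hy
  obtain ⟨x, hx, hxy⟩ := mem_neighborhood.mp hy
  exact (hT hxy).resolve_left (mem_compl.mp hx)

lemma SimpleGraph.IsIndepSet.disjoint_neighborhood {G : SimpleGraph V} [Fintype V]
    [DecidableEq V] [DecidableRel G.Adj] {S : Finset V} (hS : G.IsIndepSet (S : Set V)) :
    Disjoint S (G.neighborhood S) := by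
  refine Finset.disjoint_left.mpr fun x hxS hxN => ?_
  obtain ⟨y, hyS, hadj⟩ := mem_neighborhood.mp hxN
  exact hS (mem_coe.mpr hyS) (mem_coe.mpr hxS) hadj.ne hadj

lemma Finset.exists_injective_of_forall_subset_card_le_card_biUnion {α β : Type*}
    [DecidableEq β] {A : Finset α} (t : α → Finset β)
    (hA : ∀ W ⊆ A, #W ≤ #(W.biUnion t)) :
    ∃ f : A → β, Injective f ∧ ∀ a : A, f a ∈ t a := by
  classical
  refine (all_card_le_biUnion_card_iff_exists_injective fun a : A => t a).mp fun W => ?_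
  have hW := hA (W.map (Embedding.subtype _)) fun a ha => by
    obtain ⟨b, -, rfl⟩ := mem_map.mp ha
    exact b.2
  rwa [card_map, map_eq_image, image_biUnion] at hW

/-- The pairs `{g i, f i}` are the edges of a matching inside `U`, and `T` covers each of them. -/
lemma card_le_card_inter_of_forall_mem_or_mem {α ι : Type*} [Fintype ι] [DecidableEq α]
    {g f : ι → α} {T U : Finset α} (hg : Injective g) (hf : Injective f)
    (hgf : ∀ i j, g i ≠ f j) (hgU : ∀ i, g i ∈ U) (hfU : ∀ i, f i ∈ U)
    (hT : ∀ i, g i ∈ T ∨ f i ∈ T) :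
    Fintype.card ι ≤ #(T ∩ U) := by
  classical
  rw [← card_univ]
  refine card_le_card_of_injOn (fun i => if g i ∈ T then g i else f i) (fun i _ => ?_) ?_
  · by_cases hi : g i ∈ T
    · simp [hi, hgU]
    · simp [hi, (hT i).resolve_left hi, hfU]
  · intro i _ j _ hij
    by_cases hi : g i ∈ T <;> by_cases hj : g j ∈ T <;>
      simp only [hi, hj, if_true, if_false] at hij
    exacts [hg hij, (hgf i j hij).elim, (hgf j i hij.symm).elim, hf hij]

lemma IsTransversal.sdiff_union_neighborhood {G : SimpleGraph V} [Fintype V]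
    [DecidableEq V] [DecidableRel G.Adj] {S T : Finset V} {s u : V} (hs : s ∈ S)
    (hT : IsTransversal (G.deleteEdges {s(s, u)}) T) :
    IsTransversal G (T \ S ∪ G.neighborhood S) := by
  have hN : ∀ {x y}, G.Adj x y → x ∈ S → y ∈ G.neighborhood S := fun hxy hx =>
    mem_neighborhood.mpr ⟨_, hx, hxy⟩
  intro x y hxy
  by_cases he : s(x, y) = s(s, u)
  · rcases Sym2.eq_iff.mp he with ⟨rfl, -⟩ | ⟨-, rfl⟩
    · exact .inr (mem_union_right _ (hN hxy hs))
    · exact .inl (mem_union_right _ (hN hxy.symm hs))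
  · have hxy' : (G.deleteEdges {s(s, u)}).Adj x y := by simp [hxy, he]
    rcases hT hxy' with hx | hy
    · by_cases hxS : x ∈ S
      · exact .inr (mem_union_right _ (hN hxy hxS))
      · exact .inl (mem_union_left _ (mem_sdiff.mpr ⟨hx, hxS⟩))
    · by_cases hyS : y ∈ S
      · exact .inl (mem_union_right _ (hN hxy.symm hyS))
      · exact .inr (mem_union_left _ (mem_sdiff.mpr ⟨hy, hyS⟩))

/-- Hajnal's lemma. -/
theorem IsTauCritical.card_le_card_neighborhood {G : SimpleGraph V} [Fintype V]
    [DecidableEq V] [DecidableRel G.Adj] (hG : IsTauCritical G) {S : Finset V}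
    (hS : G.IsIndepSet (S : Set V)) :
    #S ≤ #(G.neighborhood S) := by
  induction S using Finset.strongInduction with
  | H S ih =>
  by_contra! hlt
  set N := G.neighborhood S
  have hSN := hS.disjoint_neighborhood
  obtain ⟨s, hs⟩ : S.Nonempty := card_pos.mp (by omega)
  obtain ⟨u, hsu⟩ := hG.1 s
  have huN : u ∈ N := mem_neighborhood.mpr ⟨s, hs, hsu⟩
  obtain ⟨T, hT, hTτ⟩ := exists_isTransversal_card_eq_tauNum (G.deleteEdges {s(s, u)})
  have hTlt : #T < tauNum G := hTτ ▸ hG.2 _ hsu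
  obtain ⟨f, hf, hfN⟩ := (S.erase s).exists_injective_of_forall_subset_card_le_card_biUnion
    (fun v => G.neighborFinset v) fun W hW =>
      ih W (Finset.ssubset_of_subset_of_ssubset hW (erase_ssubset hs)) (hS.mono (coe_subset.mpr
        (hW.trans (erase_subset s S))))
  have hwS (w : S.erase s) : (w : V) ∈ S := mem_of_mem_erase w.2
  have hwf (w : S.erase s) : G.Adj w (f w) := (G.mem_neighborFinset _ _).mp (hfN w)
  have hfS (w : S.erase s) : f w ∈ N := mem_neighborhood.mpr ⟨w, hwS w, hwf w⟩
  have hmatched : #(S.erase s) ≤ #(T ∩ (S ∪ N)) := by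
    rw [← Fintype.card_coe]
    refine card_le_card_inter_of_forall_mem_or_mem Subtype.val_injective hf
      (fun i j hij => Finset.disjoint_left.mp hSN (hwS i) (hij ▸ hfS j))
      (fun i => mem_union_left _ (hwS i)) (fun i => mem_union_right _ (hfS i)) fun w => hT ?_
    have hne : s(↑w, f w) ≠ s(s, u) := by
      rw [Ne, Sym2.eq_iff]
      rintro (⟨hws, -⟩ | ⟨hwu, -⟩)
      · exact ne_of_mem_erase w.2 hws
      · exact Finset.disjoint_left.mp hSN (hwS w) (hwu ▸ huN)
    simpa [hne] using hwf w
  have hτ : tauNum G ≤ #(T \ (S ∪ N)) + #N := calc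
    tauNum G ≤ #(T \ S ∪ N) := tauNum_le_card (hT.sdiff_union_neighborhood hs)
    _ ≤ #(T \ (S ∪ N) ∪ N) := card_le_card fun x => by simp only [mem_union, mem_sdiff]; tauto
    _ ≤ #(T \ (S ∪ N)) + #N := card_union_le _ _
  have := card_sdiff_add_card_inter T (S ∪ N)
  have := card_erase_of_mem hs
  omega

/-- Erdős–Gallai. For a τ-critical graph `G` with `τ(G) = t`,
`|V(G)| ≤ 2t`. -/
theorem tau_critical_card_le (G : SimpleGraph V) [Fintype V]
    (t : ℕ) (hcrit : IsTauCritical G) (ht : tauNum G = t) :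
    Fintype.card V ≤ 2 * t := by
  classical
  obtain ⟨T, hT, hTτ⟩ := exists_isTransversal_card_eq_tauNum G
  have hcompl : #Tᶜ ≤ #T :=
    (hcrit.card_le_card_neighborhood hT.isIndepSet_compl).trans
      (card_le_card hT.neighborhood_compl_subset)
  rw [card_compl] at hcompl
  omega
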